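/- Let X be an ∞-ample simplicial complex with countably infinite vertex set. If the vertex set V(X) is partitioned into finitely many parts V(X) = V₁ ⊔ V₂ ⊔ … ⊔ V_k, then the induced subcomplex of X on at least one of the parts V_i is ∞-ample (a Rado complex). -/

import Mathlib

/-- An abstract simplicial complex on vertex type `V`: a collection of nonempty
finite subsets (simplexes) closed under passing to nonempty subsets.  The vertex
set is the set of `v` with `{v}` a simplex. -/
structure SComplex (V : Type*) where
  faces : Set (Finset V)
  nonempty_of_mem : ∀ ⦃σ : Finset V⦄, σ ∈ faces → σ.Nonempty
  down_closed : ∀ ⦃σ : Finset V⦄, σ ∈ faces → ∀ ⦃τ : Finset V⦄, τ ⊆ σ → τ.Nonempty → τ ∈ faces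

namespace SComplex

variable {V W : Type*}

/-- The vertex set of a simplicial complex. -/
def verts (X : SComplex V) : Set V := {v | {v} ∈ X.faces}

/-- The set of faces of the induced subcomplex `X_U`. -/
def induced (X : SComplex V) (U : Set V) : Set (Finset V) :=
  {σ | σ ∈ X.faces ∧ (σ : Set V) ⊆ U}

/-- The induced subcomplex `X_U`, as a simplicial complex. -/
def inducedSub (X : SComplex V) (U : Set V) : SComplex V where
  faces := X.induced U
  nonempty_of_mem := fun _ h => X.nonempty_of_mem h.1
  down_closed := fun _ h _ hτ hne =>
    ⟨X.down_closed h.1 hτ hne, Set.Subset.trans (Finset.coe_subset.mpr hτ) h.2⟩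

/-- The link of a vertex `v`: simplexes `σ` with `v ∉ σ` and `σ ∪ {v} ∈ X`. -/
def link [DecidableEq V] (X : SComplex V) (v : V) : Set (Finset V) :=
  {σ | σ ∈ X.faces ∧ v ∉ σ ∧ insert v σ ∈ X.faces}

/-- The link of a simplex `σ`: simplexes `τ` with `τ ∩ σ = ∅` and `τ ∪ σ ∈ X`. -/
def linkSimplex [DecidableEq V] (X : SComplex V) (σ : Finset V) : SComplex V where
  faces := {τ | τ ∈ X.faces ∧ Disjoint τ σ ∧ τ ∪ σ ∈ X.faces}
  nonempty_of_mem := fun _ h => X.nonempty_of_mem h.1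
  down_closed := by
    intro τ hτ ρ hρ hne
    refine ⟨X.down_closed hτ.1 hρ hne, Finset.disjoint_of_subset_left hρ hτ.2.1, ?_⟩
    exact X.down_closed hτ.2.2 (Finset.union_subset_union_left hρ)
      (hne.mono Finset.subset_union_left)

/-- A downward closed family of finite sets (a subcomplex, when contained in a complex). -/
def DownClosed (A : Set (Finset V)) : Prop :=
  ∀ ⦃σ : Finset V⦄, σ ∈ A → ∀ ⦃τ : Finset V⦄, τ ⊆ σ → τ.Nonempty → τ ∈ A

/-- `X` is `r`-ample: `X` is nonempty and for every `U ⊆ V(X)` with `|U| ≤ r` and every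
subcomplex `A ⊆ X_U` there is a vertex `v ∈ V(X) \ U` with `Lk_X(v) ∩ X_U = A`. -/
def Ample [DecidableEq V] (X : SComplex V) (r : ℕ) : Prop :=
  X.faces.Nonempty ∧
  ∀ U : Finset V, (U : Set V) ⊆ X.verts → U.card ≤ r →
    ∀ A : Set (Finset V), A ⊆ X.induced (U : Set V) → DownClosed A →
      ∃ v ∈ X.verts, v ∉ U ∧ X.link v ∩ X.induced (U : Set V) = A

/-- An embedding of `A` into `X`: an isomorphism of `A` onto an induced subcomplex of `X`,
recorded as a vertex map injective on `V(A)` such that a set of vertexes of `A` is a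
simplex of `A` iff its image is a simplex of `X`. -/
def IsEmbedding [DecidableEq V] (f : W → V) (A : SComplex W) (X : SComplex V) : Prop :=
  Set.InjOn f A.verts ∧
  ∀ σ : Finset W, (σ : Set W) ⊆ A.verts → (σ ∈ A.faces ↔ σ.image f ∈ X.faces)

/-- An isomorphism of `A` onto `X`: a bijection of vertex sets carrying simplexes to
simplexes in both directions. -/
def IsIso [DecidableEq V] (f : W → V) (A : SComplex W) (X : SComplex V) : Prop :=
  Set.BijOn f A.verts X.verts ∧
  ∀ σ : Finset W, (σ : Set W) ⊆ A.verts → (σ ∈ A.faces ↔ σ.image f ∈ X.faces)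

/-- The complex obtained from `X` by removing a set `𝓕` of simplexes: all faces of `X`
containing no member of `𝓕` as a subset. -/
def remove (X : SComplex V) (𝓕 : Set (Finset V)) : SComplex V where
  faces := {σ | σ ∈ X.faces ∧ ∀ τ ∈ 𝓕, ¬ τ ⊆ σ}
  nonempty_of_mem := fun _ h => X.nonempty_of_mem h.1
  down_closed := fun _ hσ _ hρ hne =>
    ⟨X.down_closed hσ.1 hρ hne, fun τ hτ hsub => hσ.2 τ hτ (hsub.trans hρ)⟩

/-- `M'(r)`: the number of simplicial complexes (including the empty complex) with vertex
set contained in a fixed `r`-element set. -/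
noncomputable def Mprime (r : ℕ) : ℕ :=
  Nat.card {A : Set (Finset (Fin r)) // (∀ σ ∈ A, σ.Nonempty) ∧ DownClosed A}

/-- The 1-skeleton of a complex, as a simple graph on the ambient vertex type. -/
def skeletonGraph [DecidableEq V] (Y : SComplex V) : SimpleGraph V where
  Adj u v := u ≠ v ∧ ({u, v} : Finset V) ∈ Y.faces
  symm := ⟨fun u v h => ⟨h.1.symm, by rw [Finset.pair_comm]; exact h.2⟩⟩
  loopless := ⟨fun v h => h.1 rfl⟩

/-- The vertexes spanned by a family of simplexes. -/
def vertsOf (L : Set (Finset V)) : Set V := ⋃ σ ∈ L, (σ : Set V)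

/-- `X` is `r`-conic: `X` is nonempty and every subcomplex `L ⊆ X` with at most `r`
vertexes is contained in the closed star of some vertex of `X`. -/
def Conic [DecidableEq V] (X : SComplex V) (r : ℕ) : Prop :=
  X.faces.Nonempty ∧
  ∀ L : Set (Finset V), L ⊆ X.faces → DownClosed L →
    (vertsOf L).Finite → (vertsOf L).ncard ≤ r →
      ∃ v ∈ X.verts, ∀ σ ∈ L, insert v σ ∈ X.faces

/-- The intersection `⋂ᵢ St_K(vᵢ)` of the closed stars of the vertexes `v i`,
as a simplicial complex. -/
def starsInter [DecidableEq V] (K : SComplex V) {t : ℕ} (v : Fin t → V) : SComplex V where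
  faces := {σ | σ ∈ K.faces ∧ ∀ i, insert (v i) σ ∈ K.faces}
  nonempty_of_mem := fun _ h => K.nonempty_of_mem h.1
  down_closed := fun _ hσ _ hρ hne =>
    ⟨K.down_closed hσ.1 hρ hne, fun i =>
      K.down_closed (hσ.2 i) (Finset.insert_subset_insert _ hρ)
        ⟨v i, Finset.mem_insert_self _ _⟩⟩

end SComplex

/-- The set `Q_{n,p} = {gᵃ : a ≡ β² mod p for some integer β}` in a finite field. -/
def paleyQ {F : Type*} [Field F] (p : ℕ) (g : Fˣ) : Set F :=
  {x | ∃ α : ℤ, (∃ β : ℤ, (p : ℤ) ∣ α - β ^ 2) ∧ x = ((g ^ α : Fˣ) : F)}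

/-- The product `∏_{i<j} (e i - e j)` over all pairs from an enumeration `e`. -/
def pairProd {F : Type*} [Field F] {k : ℕ} (e : Fin k → F) : F :=
  ∏ q ∈ Finset.univ.filter (fun q : Fin k × Fin k => q.1 < q.2), (e q.1 - e q.2)

/-- The Iterated Paley simplicial complex `X_{n,p}`: vertex set `F = 𝔽_n`, and a nonempty
finite set is a simplex iff for every subset with at least two elements, the product of
the pairwise differences (in any enumeration) lies in `Q_{n,p}`. -/
def paleyComplex (F : Type*) [Field F] [DecidableEq F] (p : ℕ) (g : Fˣ) : SComplex F where
  faces := {σ | σ.Nonempty ∧ ∀ τ ⊆ σ, 2 ≤ τ.card →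
    ∀ e : Fin τ.card → F, Function.Injective e → Finset.image e Finset.univ = τ →
      pairProd e ∈ paleyQ p g}
  nonempty_of_mem := fun _ h => h.1
  down_closed := fun _ hσ _ hτ hne => ⟨hne, fun ρ hρ => hσ.2 ρ (hρ.trans hτ)⟩


/-! If no part were `∞`-ample, each part `Pᵢ` would have a finite `Uᵢ ⊆ Pᵢ` and a subcomplex
`Aᵢ` of `X_{Uᵢ}` that no vertex of `Pᵢ \ Uᵢ` realises as its link. Ampleness of `X` for
`U = ⋃ Uᵢ` and `A = ⋃ Aᵢ` gives a vertex `v ∉ U` with `Lk(v) ∩ X_U = A`; if `v ∈ Pᵢ`, then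
intersecting with `X_{Uᵢ}` leaves exactly `Aᵢ`, because the parts are disjoint. -/

namespace SComplex

variable {V : Type*}

lemma verts_inducedSub (X : SComplex V) (S : Set V) :
    (X.inducedSub S).verts = X.verts ∩ S := by
  ext v
  simp [verts, inducedSub, induced]

lemma induced_mono (X : SComplex V) {S T : Set V} (h : S ⊆ T) : X.induced S ⊆ X.induced T :=
  fun _ hσ => ⟨hσ.1, hσ.2.trans h⟩

lemma induced_inter (X : SComplex V) (S T : Set V) :
    X.induced S ∩ X.induced T = X.induced (S ∩ T) := by
  ext σ
  simp only [induced, Set.mem_inter_iff, Set.mem_ofPred_eq, Set.subset_inter_iff]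
  tauto

lemma induced_empty (X : SComplex V) : X.induced ∅ = ∅ :=
  Set.eq_empty_of_forall_notMem fun _ hσ =>
    let ⟨_, hx⟩ := X.nonempty_of_mem hσ.1
    hσ.2 hx

lemma induced_inducedSub (X : SComplex V) {S U : Set V} (hU : U ⊆ S) :
    (X.inducedSub S).induced U = X.induced U :=
  Set.ext fun _ => ⟨fun hσ => ⟨hσ.1.1, hσ.2⟩, fun hσ => ⟨⟨hσ.1, hσ.2.trans hU⟩, hσ.2⟩⟩

lemma DownClosed.iUnion {ι : Sort*} {A : ι → Set (Finset V)} (h : ∀ i, DownClosed (A i)) :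
    DownClosed (⋃ i, A i) := by
  intro σ hσ τ hτ hne
  obtain ⟨i, hi⟩ := Set.mem_iUnion.mp hσ
  exact Set.mem_iUnion.mpr ⟨i, h i hi hτ hne⟩

variable [DecidableEq V]

lemma link_inducedSub (X : SComplex V) {S : Set V} {v : V} (hv : v ∈ S) :
    (X.inducedSub S).link v = X.link v ∩ X.induced S := by
  ext σ
  simp only [link, inducedSub, induced, Set.mem_inter_iff, Set.mem_ofPred_eq, Finset.coe_insert,
    Set.insert_subset_iff, hv, true_and]
  tauto

lemma link_inter_induced_inducedSub (X : SComplex V) {S U : Set V} {v : V} (hv : v ∈ S)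
    (hU : U ⊆ S) :
    (X.inducedSub S).link v ∩ (X.inducedSub S).induced U = X.link v ∩ X.induced U := by
  rw [X.link_inducedSub hv, X.induced_inducedSub hU, Set.inter_assoc,
    Set.inter_eq_right.mpr (X.induced_mono hU)]

lemma link_inter_induced_eq_of_iUnion (X : SComplex V) {ι : Type*} {U : ι → Set V}
    (hU : Pairwise fun i j => Disjoint (U i) (U j)) {A : ι → Set (Finset V)}
    (hA : ∀ i, A i ⊆ X.induced (U i))
    {v : V} (hv : X.link v ∩ X.induced (⋃ i, U i) = ⋃ i, A i) (i : ι) :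
    X.link v ∩ X.induced (U i) = A i := by
  calc X.link v ∩ X.induced (U i)
      = X.link v ∩ X.induced (⋃ j, U j) ∩ X.induced (U i) := by
        rw [Set.inter_assoc, Set.inter_eq_right.mpr (X.induced_mono (Set.subset_iUnion U i))]
    _ = ⋃ j, A j ∩ X.induced (U i) := by rw [hv, Set.iUnion_inter]
    _ = A i := by
      refine (Set.iUnion_subset fun j => ?_).antisymm
        (Set.subset_iUnion_of_subset i (Set.subset_inter subset_rfl (hA i)))
      rcases eq_or_ne j i with rfl | hji
      · exact Set.inter_subset_left
      · calc A j ∩ X.induced (U i) ⊆ X.induced (U j) ∩ X.induced (U i) :=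
              Set.inter_subset_inter_left _ (hA j)
          _ = ∅ := by rw [induced_inter, (hU hji).inter_eq, induced_empty]
          _ ⊆ A i := Set.empty_subset _

lemma exists_forall_link_ne_of_not_ample {X : SComplex V} {S : Set V} {r : ℕ}
    (h : ¬ (X.inducedSub S).Ample r) :
    ∃ U : Finset V, (U : Set V) ⊆ X.verts ∩ S ∧ ∃ A ⊆ X.induced U, DownClosed A ∧
      ∀ v ∈ X.verts ∩ S, v ∉ U → X.link v ∩ X.induced U ≠ A := by
  by_cases hne : (X.inducedSub S).faces.Nonempty
  · simp only [Ample, hne, true_and, not_forall, not_exists, not_and] at h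
    obtain ⟨U, hUS, -, A, hA, hAdc, hfail⟩ := h
    rw [verts_inducedSub] at hUS
    have hUS' : (U : Set V) ⊆ S := hUS.trans Set.inter_subset_right
    refine ⟨U, hUS, A, ?_, hAdc, fun v hv hvU => ?_⟩
    · rwa [← X.induced_inducedSub hUS']
    · rw [← link_inter_induced_inducedSub X hv.2 hUS']
      exact hfail v (by rwa [verts_inducedSub]) hvU
  · refine ⟨∅, by simp, ∅, by simp, fun _ h => h.elim, ?_⟩
    rintro v hv -
    exact absurd ⟨{v}, by rwa [← verts_inducedSub] at hv⟩ hne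

end SComplex

open SComplex in
theorem stmt18_general {V : Type*} [DecidableEq V] (X : SComplex V)
    (hX : ∀ r : ℕ, 1 ≤ r → X.Ample r)
    (k : ℕ) (P : Fin k → Set V)
    (hdisj : Pairwise fun i j => Disjoint (P i) (P j))
    (hcover : ⋃ i, P i = X.verts) :
    ∃ i, ∀ r : ℕ, 1 ≤ r → (X.inducedSub (P i)).Ample r := by
  by_contra! hfail
  choose r _ hr using hfail
  choose U hUP A hAU hAdc hAlink using fun i => exists_forall_link_ne_of_not_ample (hr i)
  set W := Finset.univ.biUnion U
  have hW : (W : Set V) = ⋃ i, (U i : Set V) := by simp [W]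
  have hWX : (W : Set V) ⊆ X.verts :=
    hW ▸ Set.iUnion_subset fun i => (hUP i).trans Set.inter_subset_left
  have hAW : (⋃ i, A i) ⊆ X.induced W :=
    Set.iUnion_subset fun i => (hAU i).trans (X.induced_mono (Finset.coe_subset.mpr
      (Finset.subset_biUnion_of_mem U (Finset.mem_univ i))))
  obtain ⟨v, hvX, hvW, hv⟩ := (hX (max W.card 1) (le_max_right _ _)).2 W hWX (le_max_left _ _)
    _ hAW (DownClosed.iUnion hAdc)
  obtain ⟨i, hvi⟩ := Set.mem_iUnion.mp (hcover ▸ hvX)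
  have hUdisj : Pairwise fun i j => Disjoint (U i : Set V) (U j) := fun i j hij =>
    (hdisj hij).mono ((hUP i).trans Set.inter_subset_right) ((hUP j).trans Set.inter_subset_right)
  exact hAlink i v ⟨hvX, hvi⟩ (fun h => hvW (Finset.mem_biUnion.mpr ⟨i, Finset.mem_univ _, h⟩))
    (X.link_inter_induced_eq_of_iUnion hUdisj hAU (hW ▸ hv) i)

open SComplex in
/-- if the vertex set of a Rado complex is partitioned into finitely many
parts, the induced subcomplex on at least one part is `∞`-ample. -/
theorem stmt18 {V : Type*} [DecidableEq V] (X : SComplex V)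
    (hc : X.verts.Countable) (hi : X.verts.Infinite)
    (hX : ∀ r : ℕ, 1 ≤ r → X.Ample r)
    (k : ℕ) (P : Fin k → Set V)
    (hdisj : Pairwise fun i j => Disjoint (P i) (P j))
    (hcover : ⋃ i, P i = X.verts) :
    ∃ i, ∀ r : ℕ, 1 ≤ r → (X.inducedSub (P i)).Ample r :=
  stmt18_general X hX k P hdisj hcover
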